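/- (Proposition 3, quantitative form.) Let k, k_r : ℝ → ℝ³ be differentiable with ‖k(t)‖ = ‖k_r(t)‖ = 1, let γ : ℝ → ℝ be differentiable with γ(t) ≥ γ_min > 0, let k₁ : ℝ → ℝ satisfy k₁(t) ≥ k_min > 0, let λ : ℝ → ℝ, set ω_r := k_r × k_r' and ω := (k₁ + γ'/γ)(k × k_r) + ω_r + λ k, and suppose k' = ω × k. If ⟨k(t), k_r(t)⟩ > −1 for all t ∈ [0,T], then for all t ∈ [0,T]: γ(t)² (1 − ⟨k(t),k_r(t)⟩)/(1 + ⟨k(t),k_r(t)⟩) ≤ γ(0)² (1 − ⟨k(0),k_r(0)⟩)/(1 + ⟨k(0),k_r(0)⟩) · exp(−2 k_min t), and consequently ‖k(t) − k_r(t)‖² ≤ (4 γ(0)²/γ_min²) · (1 − ⟨k(0),k_r(0)⟩)/(1 + ⟨k(0),k_r(0)⟩) · exp(−2 k_min t). -/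

import Mathlib

open Real RealInnerProductSpace

/-- Cross product on `ℝ³` (as `EuclideanSpace ℝ (Fin 3)`). -/
noncomputable def cross3 (a b : EuclideanSpace ℝ (Fin 3)) : EuclideanSpace ℝ (Fin 3) :=
  WithLp.toLp 2 ![a 1 * b 2 - a 2 * b 1, a 2 * b 0 - a 0 * b 2, a 0 * b 1 - a 1 * b 0]

/-!
Along the closed loop the alignment `c = ⟪k, k_r⟫` satisfies the scalar equation
`c' = (k₁ + γ'/γ)(1 - c²)`: expanding `ω × k` by the vector triple product, the `λ k` term drops
out and the `ω_r` term contributes `-⟪k, k_r'⟫`, which cancels the other half of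
`c' = ⟪k', k_r⟫ + ⟪k, k_r'⟫` (note `k_r ⊥ k_r'`). Since `((1 - c)/(1 + c))' = -2c'/(1 + c)²`,
the `γ'/γ` part of the gain exactly absorbs the derivative of `γ²`, so
`V = γ²(1 - c)/(1 + c)` obeys `V' = -2k₁V ≤ -2k_min V`, and Grönwall gives the exponential decay.
Finally `‖k - k_r‖² = 2(1 - c) ≤ 4(1 - c)/(1 + c)` and `γ ≥ γ_min`.
-/

open Set
open scoped Matrix

lemma cross3_eq_crossProduct (a b : EuclideanSpace ℝ (Fin 3)) :
    cross3 a b = WithLp.toLp 2 (WithLp.ofLp a ⨯₃ WithLp.ofLp b) := rfl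

lemma cross3_add_left (a b c : EuclideanSpace ℝ (Fin 3)) :
    cross3 (a + b) c = cross3 a c + cross3 b c := by
  simp [cross3_eq_crossProduct]

lemma cross3_smul_left (r : ℝ) (a b : EuclideanSpace ℝ (Fin 3)) :
    cross3 (r • a) b = r • cross3 a b := by
  simp [cross3_eq_crossProduct]

lemma cross3_self (a : EuclideanSpace ℝ (Fin 3)) : cross3 a a = 0 := by
  simp [cross3_eq_crossProduct]

lemma cross3_cross3 (a b c : EuclideanSpace ℝ (Fin 3)) :
    cross3 (cross3 a b) c = ⟪a, c⟫ • b - ⟪b, c⟫ • a := by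
  simp [cross3_eq_crossProduct, cross_cross_eq_smul_sub_smul, EuclideanSpace.inner_eq_star_dotProduct,
    dotProduct_comm]

lemma HasDerivAt.inner_eq_zero_of_norm_eq_one {E : Type*} [NormedAddCommGroup E]
    [InnerProductSpace ℝ E] {f : ℝ → E} {f' : E} {t : ℝ} (hd : HasDerivAt f f' t)
    (hf : ∀ s, ‖f s‖ = 1) : ⟪f t, f'⟫ = 0 := by
  have hconst : (fun s => ⟪f s, f s⟫) = fun _ => (1 : ℝ) := by
    ext s
    rw [real_inner_self_eq_norm_sq, hf, one_pow]
  have h := (hd.inner ℝ hd).unique (hconst ▸ hasDerivAt_const t (1 : ℝ))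
  linarith [real_inner_comm f' (f t)]

lemma inner_add_inner_cross3_feedback {u v w : EuclideanSpace ℝ (Fin 3)} (a l : ℝ)
    (hu : ‖u‖ = 1) (hv : ‖v‖ = 1) (hvw : ⟪v, w⟫ = 0) :
    ⟪u, w⟫ + ⟪cross3 (a • cross3 u v + cross3 v w + l • u) u, v⟫ = a * (1 - ⟪u, v⟫ ^ 2) := by
  have huu : ⟪u, u⟫ = 1 := by rw [real_inner_self_eq_norm_sq, hu, one_pow]
  have hvv : ⟪v, v⟫ = 1 := by rw [real_inner_self_eq_norm_sq, hv, one_pow]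
  simp only [cross3_add_left, cross3_smul_left, cross3_self, cross3_cross3, smul_zero, add_zero,
    inner_add_left, inner_sub_left, inner_smul_left, RCLike.conj_to_real]
  rw [real_inner_comm v w, hvw, real_inner_comm u v, real_inner_comm u w, huu, hvv]
  ring

lemma hasDerivAt_inner_of_feedback {k kr : ℝ → EuclideanSpace ℝ (Fin 3)}
    {kr' : EuclideanSpace ℝ (Fin 3)} {a l t : ℝ} (hk_unit : ‖k t‖ = 1)
    (hkr_unit : ∀ s, ‖kr s‖ = 1) (hkr : HasDerivAt kr kr' t)
    (hk : HasDerivAt k (cross3 (a • cross3 (k t) (kr t) + cross3 (kr t) kr' + l • k t) (k t)) t) :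
    HasDerivAt (fun s => ⟪k s, kr s⟫) (a * (1 - ⟪k t, kr t⟫ ^ 2)) t := by
  exact (hk.inner ℝ hkr).congr_deriv (inner_add_inner_cross3_feedback a l hk_unit (hkr_unit t)
    (hkr.inner_eq_zero_of_norm_eq_one hkr_unit))

lemma hasDerivAt_sq_mul_one_sub_div_one_add {γ c : ℝ → ℝ} {γ' k₁ t : ℝ}
    (hγ : HasDerivAt γ γ' t) (hc : HasDerivAt c ((k₁ + γ' / γ t) * (1 - c t ^ 2)) t)
    (hγ0 : γ t ≠ 0) (hc1 : 1 + c t ≠ 0) :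
    HasDerivAt (fun s => γ s ^ 2 * ((1 - c s) / (1 + c s)))
      (-2 * k₁ * (γ t ^ 2 * ((1 - c t) / (1 + c t)))) t := by
  refine ((hγ.pow 2).mul ((hc.const_sub 1).div (hc.const_add 1) hc1)).congr_deriv ?_
  simp only [Pi.pow_apply, Pi.div_apply]
  field_simp
  ring

lemma le_mul_exp_of_hasDerivAt_le_mul {f f' : ℝ → ℝ} {K a b : ℝ}
    (hf : ∀ x ∈ Icc a b, HasDerivAt f (f' x) x) (bound : ∀ x ∈ Ico a b, f' x ≤ K * f x) :
    ∀ x ∈ Icc a b, f x ≤ f a * exp (K * (x - a)) := by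
  intro x hx
  rw [← gronwallBound_ε0]
  refine le_gronwallBound_of_liminf_deriv_right_le (f' := f') (fun y hy => (hf y hy).continuousAt.continuousWithinAt)
    (fun y hy r hr => (hf y (Ico_subset_Icc_self hy)).hasDerivWithinAt.liminf_right_slope_le hr)
    le_rfl (fun y hy => by simpa using bound y hy) x hx

lemma one_sub_inner_div_one_add_inner_nonneg {E : Type*} [NormedAddCommGroup E]
    [InnerProductSpace ℝ E] {u v : E} (hu : ‖u‖ = 1) (hv : ‖v‖ = 1) (h : -1 < ⟪u, v⟫) :
    0 ≤ (1 - ⟪u, v⟫) / (1 + ⟪u, v⟫) := by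
  have := real_inner_le_norm u v
  rw [hu, hv] at this
  exact div_nonneg (by linarith) (by linarith)

lemma norm_sub_sq_le_four_mul_one_sub_inner_div_one_add_inner {E : Type*} [NormedAddCommGroup E]
    [InnerProductSpace ℝ E] {u v : E} (hu : ‖u‖ = 1) (hv : ‖v‖ = 1) (h : -1 < ⟪u, v⟫) :
    ‖u - v‖ ^ 2 ≤ 4 * ((1 - ⟪u, v⟫) / (1 + ⟪u, v⟫)) := by
  have := real_inner_le_norm u v
  rw [hu, hv] at this
  rw [norm_sub_sq_real, hu, hv, ← mul_div_assoc, le_div_iff₀ (by linarith)]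
  nlinarith

theorem stmt12_general (k kr kr' : ℝ → EuclideanSpace ℝ (Fin 3))
    (γ γ' k₁ lam : ℝ → ℝ) (γmin kmin T : ℝ)
    (hγmin : 0 < γmin)
    (hkunit : ∀ t, ‖k t‖ = 1) (hkrunit : ∀ t, ‖kr t‖ = 1)
    (hkr : ∀ t, HasDerivAt kr (kr' t) t)
    (hγ : ∀ t, HasDerivAt γ (γ' t) t) (hγlb : ∀ t, γmin ≤ γ t)
    (hk₁lb : ∀ t, kmin ≤ k₁ t)
    (ωr ω : ℝ → EuclideanSpace ℝ (Fin 3))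
    (hωr : ∀ t, ωr t = cross3 (kr t) (kr' t))
    (hω : ∀ t, ω t = (k₁ t + γ' t / γ t) • cross3 (k t) (kr t) + ωr t + lam t • k t)
    (hk : ∀ t, HasDerivAt k (cross3 (ω t) (k t)) t)
    (hne : ∀ t ∈ Set.Icc 0 T, -1 < ⟪k t, kr t⟫) :
    ∀ t ∈ Set.Icc 0 T,
      γ t ^ 2 * ((1 - ⟪k t, kr t⟫) / (1 + ⟪k t, kr t⟫)) ≤
        γ 0 ^ 2 * ((1 - ⟪k 0, kr 0⟫) / (1 + ⟪k 0, kr 0⟫)) * Real.exp (-2 * kmin * t) ∧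
      ‖k t - kr t‖ ^ 2 ≤
        4 * γ 0 ^ 2 / γmin ^ 2 * ((1 - ⟪k 0, kr 0⟫) / (1 + ⟪k 0, kr 0⟫)) *
          Real.exp (-2 * kmin * t) := by
  have hγpos : ∀ s, 0 < γ s := fun s => hγmin.trans_le (hγlb s)
  have hc (s : ℝ) : HasDerivAt (fun s => ⟪k s, kr s⟫)
      ((k₁ s + γ' s / γ s) * (1 - ⟪k s, kr s⟫ ^ 2)) s :=
    hasDerivAt_inner_of_feedback (hkunit s) hkrunit (hkr s) (by simpa only [hω, hωr] using hk s)
  have hr (s : ℝ) (hs : s ∈ Icc 0 T) : 0 ≤ (1 - ⟪k s, kr s⟫) / (1 + ⟪k s, kr s⟫) :=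
    one_sub_inner_div_one_add_inner_nonneg (hkunit s) (hkrunit s) (hne s hs)
  have hdecay := le_mul_exp_of_hasDerivAt_le_mul (K := -2 * kmin)
    (fun s hs => hasDerivAt_sq_mul_one_sub_div_one_add (hγ s) (hc s) (hγpos s).ne'
      (by linarith [hne s hs]))
    (fun s hs => by
      have := mul_nonneg (sq_nonneg (γ s)) (hr s (Ico_subset_Icc_self hs))
      nlinarith [hk₁lb s])
  intro t ht
  have hV := hdecay t ht
  simp only [sub_zero] at hV
  refine ⟨hV, ?_⟩
  have hγt : γmin ^ 2 ≤ γ t ^ 2 := pow_le_pow_left₀ hγmin.le (hγlb t) 2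
  calc ‖k t - kr t‖ ^ 2 ≤ 4 * ((1 - ⟪k t, kr t⟫) / (1 + ⟪k t, kr t⟫)) :=
        norm_sub_sq_le_four_mul_one_sub_inner_div_one_add_inner (hkunit t) (hkrunit t) (hne t ht)
    _ ≤ 4 * (γ t ^ 2 * ((1 - ⟪k t, kr t⟫) / (1 + ⟪k t, kr t⟫)) / γmin ^ 2) := by
        gcongr 4 * ?_
        rw [le_div_iff₀ (by positivity), mul_comm]
        gcongr
        exact hr t ht
    _ ≤ 4 * (γ 0 ^ 2 * ((1 - ⟪k 0, kr 0⟫) / (1 + ⟪k 0, kr 0⟫)) * exp (-2 * kmin * t) / γmin ^ 2) := by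
        gcongr
    _ = _ := by ring

/-- Proposition 3, quantitative form: under the feedback angular velocity
`ω = (k₁ + γ'/γ)(k × k_r) + ω_r + λ k` with `ω_r = k_r × k_r'`, `k' = ω × k`,
unit curves `k, k_r`, gains `γ ≥ γ_min > 0` and `k₁ ≥ k_min > 0`, if
`⟨k(t), k_r(t)⟩ > −1` on `[0,T]` then for all `t ∈ [0,T]` the Lyapunov function
`γ²(1 − ⟨k,k_r⟩)/(1 + ⟨k,k_r⟩)` decays as `exp(−2 k_min t)` from its initial value,
and `‖k(t) − k_r(t)‖²` is bounded accordingly. -/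
theorem stmt12 (k kr kr' : ℝ → EuclideanSpace ℝ (Fin 3))
    (γ γ' k₁ lam : ℝ → ℝ) (γmin kmin T : ℝ)
    (hγmin : 0 < γmin) (hkmin : 0 < kmin)
    (hkunit : ∀ t, ‖k t‖ = 1) (hkrunit : ∀ t, ‖kr t‖ = 1)
    (hkr : ∀ t, HasDerivAt kr (kr' t) t)
    (hγ : ∀ t, HasDerivAt γ (γ' t) t) (hγlb : ∀ t, γmin ≤ γ t)
    (hk₁lb : ∀ t, kmin ≤ k₁ t)
    (ωr ω : ℝ → EuclideanSpace ℝ (Fin 3))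
    (hωr : ∀ t, ωr t = cross3 (kr t) (kr' t))
    (hω : ∀ t, ω t = (k₁ t + γ' t / γ t) • cross3 (k t) (kr t) + ωr t + lam t • k t)
    (hk : ∀ t, HasDerivAt k (cross3 (ω t) (k t)) t)
    (hne : ∀ t ∈ Set.Icc 0 T, -1 < ⟪k t, kr t⟫) :
    ∀ t ∈ Set.Icc 0 T,
      γ t ^ 2 * ((1 - ⟪k t, kr t⟫) / (1 + ⟪k t, kr t⟫)) ≤
        γ 0 ^ 2 * ((1 - ⟪k 0, kr 0⟫) / (1 + ⟪k 0, kr 0⟫)) * Real.exp (-2 * kmin * t) ∧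
      ‖k t - kr t‖ ^ 2 ≤
        4 * γ 0 ^ 2 / γmin ^ 2 * ((1 - ⟪k 0, kr 0⟫) / (1 + ⟪k 0, kr 0⟫)) *
          Real.exp (-2 * kmin * t) :=
  stmt12_general k kr kr' γ γ' k₁ lam γmin kmin T hγmin hkunit hkrunit hkr hγ hγlb hk₁lb ωr ω hωr hω
    hk hne
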